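/- arXiv:1604.06162 — 3 statements merged into one kernel-verified Lean document; each statement's English description precedes it below -/
import Mathlib

section
/- If a hypothesis class H on instance space X has Littlestone dimension at most d, then for every t >= 0 and every depth-t X-valued tree x, the number of sign-paths realized by H on x satisfies |S(H,x)| <= sum_{i=0}^{d} binom(t, i). -/
/-- A depth-`t` `X`-valued tree: a family of maps `x_s : {-1,+1}^(s-1) → X`. -/
def XTree (X : Type*) (t : ℕ) := (s : Fin t) → (Fin s.val → ℤ) → X

/-- A sign path: a sequence with entries in `{-1,+1}`. -/
def IsSignPath {t : ℕ} (ε : Fin t → ℤ) : Prop := ∀ s, ε s = 1 ∨ ε s = -1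

/-- `S(H, x)`: the set of sign paths realized by some hypothesis `h ∈ H` along the tree `x`,
i.e. `ε_s = h (x_s (ε_1, …, ε_{s-1}))` for all `s`. -/
def realizedPaths {X : Type*} (H : Set (X → ℤ)) {t : ℕ} (x : XTree X t) :
    Set (Fin t → ℤ) :=
  {ε | IsSignPath ε ∧ ∃ h ∈ H, ∀ s : Fin t,
    ε s = h (x s (fun i => ε ⟨i.val, i.isLt.trans s.isLt⟩))}

/-- The tree shattering coefficient `S(H, t)`: the maximum of `|S(H, x)|` over
all depth-`t` `X`-valued trees `x`. -/
noncomputable def treeShatter {X : Type*} (H : Set (X → ℤ)) (t : ℕ) : ℕ :=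
  ⨆ x : XTree X t, (realizedPaths H x).ncard

/-- A depth-`t` tree is shattered by `H` if every sign path is realized by some `h ∈ H`. -/
def Shattered {X : Type*} (H : Set (X → ℤ)) {t : ℕ} (x : XTree X t) : Prop :=
  ∀ ε : Fin t → ℤ, IsSignPath ε → ε ∈ realizedPaths H x

/-!
Induction on the depth `t`. Splitting sign paths at the root, `S(H, x)` injects into the
disjoint union of `S(H₊, x₊)` and `S(H₋, x₋)`, where `H_σ` is the set of hypotheses taking the
value `σ` at the root and `x_σ` is the subtree followed after the sign `σ`. Neither `H_σ`
shatters a tree of depth `d + 1`, and at most one of them shatters a tree of depth `d`: trees of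
depth `d` shattered by `H₊` and by `H₋` could be hung below the root to give a tree of depth
`d + 1` shattered by `H`. Pascal's rule for partial sums of binomial coefficients then closes the
induction.
-/

namespace XTree

variable {X : Type*} {t : ℕ}

def root (x : XTree X (t + 1)) : X := x 0 Fin.elim0

def subtree (x : XTree X (t + 1)) (σ : ℤ) : XTree X t := fun s ε => x s.succ (Fin.cons σ ε)

/-- The tree with root `r` continuing with `x₁` after the sign `1` and with `x₂` otherwise. -/
def join (r : X) (x₁ x₂ : XTree X t) : XTree X (t + 1) :=
  Fin.cases (motive := fun s => (Fin s.val → ℤ) → X) (fun _ => r)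
    fun s (E : Fin (s.val + 1) → ℤ) =>
      if E 0 = 1 then x₁ s (Fin.tail E) else x₂ s (Fin.tail E)

@[simp] lemma join_root (r : X) (x₁ x₂ : XTree X t) : (join r x₁ x₂).root = r := rfl

@[simp] lemma join_subtree_one (r : X) (x₁ x₂ : XTree X t) :
    (join r x₁ x₂).subtree 1 = x₁ := by
  funext s E
  exact (if_pos rfl : (if (1 : ℤ) = 1 then x₁ s E else x₂ s E) = x₁ s E)

@[simp] lemma join_subtree_neg_one (r : X) (x₁ x₂ : XTree X t) :
    (join r x₁ x₂).subtree (-1) = x₂ := by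
  funext s E
  exact (if_neg (by decide) : (if (-1 : ℤ) = 1 then x₁ s E else x₂ s E) = x₂ s E)

end XTree

open XTree

section

variable {X : Type*}

lemma cons_mem_realizedPaths_iff {H : Set (X → ℤ)} {t : ℕ} {x : XTree X (t + 1)} {σ : ℤ}
    {ε : Fin t → ℤ} :
    Fin.cons σ ε ∈ realizedPaths H x ↔
      (σ = 1 ∨ σ = -1) ∧ ε ∈ realizedPaths {h ∈ H | h x.root = σ} (x.subtree σ) := by
  have prefix_cons (s : Fin t) :
      (fun i : Fin s.succ.val =>
        (Fin.cons σ ε : Fin (t + 1) → ℤ) ⟨i.val, i.isLt.trans s.succ.isLt⟩)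
        = Fin.cons σ (fun i : Fin s.val => ε ⟨i.val, i.isLt.trans s.isLt⟩) := by
    funext i
    cases i using Fin.cases <;> rfl
  have prefix_zero :
      (fun i : Fin (0 : Fin (t + 1)).val =>
        (Fin.cons σ ε : Fin (t + 1) → ℤ) ⟨i.val, i.isLt.trans (0 : Fin (t + 1)).isLt⟩)
        = Fin.elim0 :=
    funext fun i => i.elim0
  simp only [realizedPaths, IsSignPath, Set.mem_ofPred_eq, Fin.forall_fin_succ, Fin.cons_zero,
    Fin.cons_succ, prefix_cons, prefix_zero, root, subtree]
  constructor
  · rintro ⟨⟨hσ, hε⟩, h, hH, h0, hs⟩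
    exact ⟨hσ, hε, h, ⟨hH, h0.symm⟩, hs⟩
  · rintro ⟨hσ, hε, h, ⟨hH, h0⟩, hs⟩
    exact ⟨⟨hσ, hε⟩, h, hH, h0.symm, hs⟩

lemma realizedPaths_finite (H : Set (X → ℤ)) {t : ℕ} (x : XTree X t) :
    (realizedPaths H x).Finite :=
  (Set.Finite.pi fun _ => Set.toFinite ({1, -1} : Set ℤ)).subset fun _ hε i _ => hε.1 i

lemma Shattered.mono {H H' : Set (X → ℤ)} {t : ℕ} {x : XTree X t} (hHH' : H ⊆ H')
    (hH : Shattered H x) : Shattered H' x := fun ε hε =>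
  let ⟨hsign, h, hh, hpath⟩ := hH ε hε
  ⟨hsign, h, hHH' hh, hpath⟩

lemma shattered_of_nonempty {H : Set (X → ℤ)} (hH : H.Nonempty) (x : XTree X 0) :
    Shattered H x := fun _ hε =>
  ⟨hε, hH.some, hH.some_mem, fun s => s.elim0⟩

lemma shattered_join {H : Set (X → ℤ)} {t : ℕ} {r : X} {x₁ x₂ : XTree X t}
    (h₁ : Shattered {h ∈ H | h r = 1} x₁) (h₂ : Shattered {h ∈ H | h r = -1} x₂) :
    Shattered H (join r x₁ x₂) := by
  intro ε hε
  rw [← Fin.cons_self_tail ε, cons_mem_realizedPaths_iff]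
  have htail : IsSignPath (Fin.tail ε) := fun s => hε s.succ
  rcases hε 0 with h0 | h0 <;> rw [h0]
  · exact ⟨Or.inl rfl, by simpa using h₁ _ htail⟩
  · exact ⟨Or.inr rfl, by simpa using h₂ _ htail⟩

lemma realizedPaths_subset_union (H : Set (X → ℤ)) {t : ℕ} (x : XTree X (t + 1)) :
    realizedPaths H x ⊆
      Fin.cons 1 '' realizedPaths {h ∈ H | h x.root = 1} (x.subtree 1) ∪
      Fin.cons (-1) '' realizedPaths {h ∈ H | h x.root = -1} (x.subtree (-1)) := by
  intro ε hε
  rw [← Fin.cons_self_tail ε, cons_mem_realizedPaths_iff] at hε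
  rw [← Fin.cons_self_tail ε]
  rcases hε with ⟨h0 | h0, htail⟩ <;> rw [h0] at htail ⊢
  · exact Or.inl (Set.mem_image_of_mem _ htail)
  · exact Or.inr (Set.mem_image_of_mem _ htail)

lemma Set.ncard_le_ncard_add_ncard_of_subset_image_union {α β : Type*} {S : Set β}
    {A B : Set α} {f g : α → β} (hA : A.Finite) (hB : B.Finite) (h : S ⊆ f '' A ∪ g '' B) :
    S.ncard ≤ A.ncard + B.ncard :=
  calc S.ncard ≤ (f '' A ∪ g '' B).ncard :=
        Set.ncard_le_ncard h ((hA.image f).union (hB.image g))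
    _ ≤ (f '' A).ncard + (g '' B).ncard := Set.ncard_union_le _ _
    _ ≤ A.ncard + B.ncard := add_le_add (Set.ncard_image_le hA) (Set.ncard_image_le hB)

lemma sum_range_succ_choose_succ (t d : ℕ) :
    ∑ i ∈ Finset.range (d + 1), (t + 1).choose i
      = ∑ i ∈ Finset.range (d + 1), t.choose i + ∑ i ∈ Finset.range d, t.choose i := by
  induction d with
  | zero => simp
  | succ d ih =>
    rw [Finset.sum_range_succ, ih, Finset.sum_range_succ _ (d + 1),
      Finset.sum_range_succ _ d, Nat.choose_succ_succ]
    ring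

lemma realizedPaths_eq_empty {H : Set (X → ℤ)} (hH : ∀ y : XTree X 0, ¬ Shattered H y)
    {t : ℕ} (x : XTree X t) : realizedPaths H x = ∅ :=
  Set.eq_empty_of_forall_notMem fun _ ⟨_, h, hh, _⟩ =>
    hH (fun s => s.elim0) (shattered_of_nonempty ⟨h, hh⟩ _)

theorem ncard_realizedPaths_le_sum_choose {t d : ℕ} {H : Set (X → ℤ)}
    (hH : ∀ y : XTree X d, ¬ Shattered H y) (x : XTree X t) :
    (realizedPaths H x).ncard ≤ ∑ i ∈ Finset.range d, t.choose i := by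
  induction t generalizing d H with
  | zero =>
    cases d with
    | zero => simp [realizedPaths_eq_empty hH]
    | succ d =>
      calc (realizedPaths H x).ncard ≤ 1 := Set.ncard_le_one_of_subsingleton _
        _ ≤ ∑ i ∈ Finset.range (d + 1), (0 : ℕ).choose i := by simp [Finset.sum_range_succ']
  | succ t ih =>
    cases d with
    | zero => simp [realizedPaths_eq_empty hH]
    | succ d =>
      have hsplit := Set.ncard_le_ncard_add_ncard_of_subset_image_union
        (realizedPaths_finite _ _) (realizedPaths_finite _ _) (realizedPaths_subset_union H x)
      set Hpos := {h ∈ H | h x.root = 1}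
      set Hneg := {h ∈ H | h x.root = -1}
      have hHpos : ∀ y : XTree X (d + 1), ¬ Shattered Hpos y := fun y hy =>
        hH y (hy.mono (Set.sep_subset _ _))
      have hHneg : ∀ y : XTree X (d + 1), ¬ Shattered Hneg y := fun y hy =>
        hH y (hy.mono (Set.sep_subset _ _))
      have hone :
          (∀ y : XTree X d, ¬ Shattered Hpos y) ∨ (∀ y : XTree X d, ¬ Shattered Hneg y) := by
        by_contra! ⟨⟨y₁, hy₁⟩, ⟨y₂, hy₂⟩⟩
        exact hH _ (shattered_join hy₁ hy₂)
      rw [sum_range_succ_choose_succ]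
      rcases hone with hd | hd
      · have hpos := ih hd (x.subtree 1)
        have hneg := ih hHneg (x.subtree (-1))
        omega
      · have hpos := ih hHpos (x.subtree 1)
        have hneg := ih hd (x.subtree (-1))
        omega

end

theorem stmt9_general {X : Type*} (H : Set (X → ℤ))
    (d : ℕ) (hLdim : ∀ x : XTree X (d + 1), ¬ Shattered H x)
    (t : ℕ) (x : XTree X t) :
    (realizedPaths H x).ncard ≤ ∑ i ∈ Finset.range (d + 1), t.choose i :=
  ncard_realizedPaths_le_sum_choose hLdim x

theorem stmt9 {X : Type*} (H : Set (X → ℤ))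
    (hsign : ∀ h ∈ H, ∀ a : X, h a = 1 ∨ h a = -1)
    (d : ℕ) (hLdim : ∀ x : XTree X (d + 1), ¬ Shattered H x)
    (t : ℕ) (x : XTree X t) :
    (realizedPaths H x).ncard ≤ ∑ i ∈ Finset.range (d + 1), t.choose i :=
  stmt9_general H d hLdim t x
end

section
/- The Littlestone dimension of C^l, the class of unions of at most l singletons on an infinite instance space X, equals l. -/
open Classical in
/-- `C^l`: the class of functions equal to `+1` everywhere except on at most `l` points,
where they equal `-1` (unions of at most `l` singletons). -/
def unionSingletons (X : Type*) (l : ℕ) : Set (X → ℤ) :=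
  {h | ∃ A : Set X, A.Finite ∧ A.ncard ≤ l ∧ ∀ a, h a = if a ∈ A then -1 else 1}

section Adv
variable {X : Type*} {t : ℕ}

noncomputable def ptOf (x : XTree X t) (e : ℕ → ℤ) (m : ℕ) (hm : m < t) : X :=
  x ⟨m, hm⟩ (fun i => e i.val)

open Classical in
noncomputable def advNext (x : XTree X t) (e : ℕ → ℤ) (n : ℕ) : ℤ :=
  if h : ∃ m, m < n ∧ ∃ hm : m < t, ∃ hn : n < t, ptOf x e m hm = ptOf x e n hn
  then - e (Nat.find h)
  else -1

noncomputable def advF (x : XTree X t) : ℕ → ℕ → ℤ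
  | 0 => fun _ => 1
  | n+1 => Function.update (advF x n) n (advNext x (advF x n) n)

noncomputable def advEps (x : XTree X t) (n : ℕ) : ℤ := advF x (n+1) n

lemma advF_agree (x : XTree X t) : ∀ n m, m < n → advF x n m = advEps x m := by
  intro n
  induction n with
  | zero => omega
  | succ n ih =>
    intro m hm
    rcases Nat.lt_succ_iff_lt_or_eq.mp hm with h | h
    · have : advF x (n+1) m = advF x n m := by
        show Function.update (advF x n) n _ m = _
        rw [Function.update_of_ne (by omega : m ≠ n)]
      rw [this, ih m h]
    · subst h; rfl

lemma ptOf_congr (x : XTree X t) {e e' : ℕ → ℤ} {m : ℕ} (hm : m < t)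
    (he : ∀ i, i < m → e i = e' i) : ptOf x e m hm = ptOf x e' m hm := by
  unfold ptOf
  congr 1
  funext i
  exact he i.val i.isLt

open Classical in
lemma advNext_congr (x : XTree X t) {e e' : ℕ → ℤ} {n : ℕ}
    (he : ∀ i, i < n → e i = e' i) : advNext x e n = advNext x e' n := by
  have hpt : ∀ m (hm : m < t), m ≤ n → ptOf x e m hm = ptOf x e' m hm := by
    intro m hm hmn
    exact ptOf_congr x hm (fun i hi => he i (lt_of_lt_of_le hi hmn))
  have hiff : ∀ m, (m < n ∧ ∃ hm : m < t, ∃ hn : n < t, ptOf x e m hm = ptOf x e n hn) ↔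
      (m < n ∧ ∃ hm : m < t, ∃ hn : n < t, ptOf x e' m hm = ptOf x e' n hn) := by
    intro m
    constructor <;> rintro ⟨h1, hm, hn, h2⟩ <;>
      exact ⟨h1, hm, hn, by rw [← hpt m hm h1.le, ← hpt n hn le_rfl] at *; exact h2⟩
  unfold advNext
  by_cases h : ∃ m, m < n ∧ ∃ hm : m < t, ∃ hn : n < t, ptOf x e m hm = ptOf x e n hn
  · have h' : ∃ m, m < n ∧ ∃ hm : m < t, ∃ hn : n < t, ptOf x e' m hm = ptOf x e' n hn :=
      let ⟨m, hm⟩ := h; ⟨m, (hiff m).mp hm⟩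
    rw [dif_pos h, dif_pos h']
    have hfind : Nat.find h = Nat.find h' := by
      apply le_antisymm
      · exact Nat.find_le ((hiff _).mpr (Nat.find_spec h'))
      · exact Nat.find_le ((hiff _).mp (Nat.find_spec h))
    rw [hfind]
    have := (Nat.find_spec h').1
    rw [he _ this]
  · have h' : ¬ ∃ m, m < n ∧ ∃ hm : m < t, ∃ hn : n < t, ptOf x e' m hm = ptOf x e' n hn := by
      rintro ⟨m, hm⟩; exact h ⟨m, (hiff m).mpr hm⟩
    rw [dif_neg h, dif_neg h']

lemma advEps_spec (x : XTree X t) (n : ℕ) : advEps x n = advNext x (advEps x) n := by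
  have h1 : advEps x n = advNext x (advF x n) n := by
    simp [advEps, advF, Function.update]
  rw [h1]
  exact advNext_congr x (fun i hi => advF_agree x n i hi)

open Classical in
lemma advEps_sign (x : XTree X t) : ∀ n, advEps x n = 1 ∨ advEps x n = -1 := by
  intro n
  induction n using Nat.strong_induction_on with
  | _ n ih =>
    rw [advEps_spec]
    unfold advNext
    split_ifs with h
    · rcases ih (Nat.find h) (Nat.find_spec h).1 with h1 | h1 <;> simp [h1]
    · right; rfl

open Classical in
/-- key dichotomy -/
lemma advEps_key (x : XTree X t) (n : ℕ) :
    (∃ m, m < n ∧ ∃ hm : m < t, ∃ hn : n < t,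
        ptOf x (advEps x) m hm = ptOf x (advEps x) n hn ∧ advEps x n = - advEps x m) ∨
    ((¬ ∃ m, m < n ∧ ∃ hm : m < t, ∃ hn : n < t,
        ptOf x (advEps x) m hm = ptOf x (advEps x) n hn) ∧ advEps x n = -1) := by
  by_cases h : ∃ m, m < n ∧ ∃ hm : m < t, ∃ hn : n < t,
      ptOf x (advEps x) m hm = ptOf x (advEps x) n hn
  · left
    obtain ⟨h1, hm, hn, h2⟩ := Nat.find_spec h
    refine ⟨Nat.find h, h1, hm, hn, h2, ?_⟩
    rw [advEps_spec]; unfold advNext; rw [dif_pos h]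
  · right
    refine ⟨h, ?_⟩
    rw [advEps_spec]; unfold advNext; rw [dif_neg h]

end Adv

theorem stmt12 {X : Type*} [Infinite X] (l : ℕ) :
    (∃ x : XTree X l, Shattered (unionSingletons X l) x) ∧
    (∀ x : XTree X (l + 1), ¬ Shattered (unionSingletons X l) x) := by
  classical
  constructor
  · -- lower bound
    obtain a : Fin l ↪ X := Fin.valEmbedding.trans (Infinite.natEmbedding X)
    refine ⟨fun s _ => a s, ?_⟩
    intro ε hε
    refine ⟨hε, fun p => if p ∈ a '' {s | ε s = -1} then -1 else 1,
      ⟨a '' {s | ε s = -1}, (Set.toFinite _).image a, ?_, fun _ => rfl⟩, ?_⟩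
    · calc (a '' {s | ε s = -1}).ncard ≤ ({s | ε s = -1} : Set (Fin l)).ncard :=
            Set.ncard_image_le (Set.toFinite _)
        _ ≤ (Set.univ : Set (Fin l)).ncard :=
            Set.ncard_le_ncard (Set.subset_univ _) (Set.toFinite _)
        _ = l := by rw [Set.ncard_univ, Nat.card_eq_fintype_card, Fintype.card_fin]
    · intro s
      have hmem : a s ∈ a '' {s | ε s = -1} ↔ ε s = -1 :=
        (a.injective.mem_set_image (s := {s | ε s = -1}))
      rcases hε s with h1 | h1 <;> simp [h1, hmem]
  · -- upper bound
    intro x hsh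
    set e := advEps x with he
    set ε : Fin (l+1) → ℤ := fun s => e s.val with hε
    have hsp : IsSignPath ε := fun s => advEps_sign x s.val
    obtain ⟨-, h, ⟨A, hAfin, hAcard, hAval⟩, hreal⟩ := hsh ε hsp
    have hreal' : ∀ s : Fin (l+1), e s.val = h (ptOf x e s.val s.isLt) := fun s => hreal s
    have nodup : ∀ n (hn : n < l+1) m (hm : m < n) (hm' : m < l+1),
        ptOf x e m hm' ≠ ptOf x e n hn := by
      intro n hn m hm hm' heq
      rcases advEps_key x n with ⟨m₀, hm₀n, hm₀t, hn', hpt, hval⟩ | ⟨hno, -⟩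
      · have h1 : e n = e m₀ := by
          have e1 := hreal' ⟨n, hn⟩
          have e2 := hreal' ⟨m₀, hm₀t⟩
          simp only [he] at *
          rw [e1, e2]
          congr 1
          exact hpt.symm
        have h2 : e n = - e m₀ := hval
        rw [he] at h1 h2
        rcases advEps_sign x m₀ with h3 | h3 <;> rw [h3] at h1 h2 <;> omega
      · exact hno ⟨m, hm, hm', hn, heq⟩
    have hneg : ∀ n (hn : n < l+1), e n = -1 := by
      intro n hn
      rcases advEps_key x n with ⟨m₀, hm₀n, hm₀t, hn', hpt, -⟩ | ⟨-, hval⟩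
      · exact absurd hpt (nodup n hn' m₀ hm₀n hm₀t)
      · exact hval
    have hmemA : ∀ n (hn : n < l+1), ptOf x e n hn ∈ A := by
      intro n hn
      by_contra hc
      have := hreal' ⟨n, hn⟩
      rw [hneg n hn, hAval] at this
      simp [hc] at this
    set g : Fin (l+1) → X := fun s => ptOf x e s.val s.isLt with hg
    have ginj : Function.Injective g := by
      intro s s' heq
      by_contra hne
      rcases lt_trichotomy s.val s'.val with h1 | h1 | h1
      · exact nodup s'.val s'.isLt s.val h1 s.isLt heq
      · exact hne (Fin.ext h1)
      · exact nodup s.val s.isLt s'.val h1 s'.isLt heq.symm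
    have hsub : Set.range g ⊆ A := by
      rintro - ⟨s, rfl⟩
      exact hmemA s.val s.isLt
    have hcard : (Set.range g).ncard = l + 1 := by
      rw [← Set.image_univ, Set.ncard_image_of_injective _ ginj, Set.ncard_univ,
        Nat.card_eq_fintype_card, Fintype.card_fin]
    have := Set.ncard_le_ncard hsub hAfin
    omega
end

section
/- For any finite hypothesis class H and integer k >= 0, ELdim(H, k) <= (k+1) * |H|^(1/(k+1)). -/
/-- An extended mistake tree: leaves are labeled by hypotheses, and each internal node
carries an example `a : X`, the label `y ∈ {-1,+1}` of its dashed downward edge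
(the dashed edge goes to the child labeled `y`), and the two subtrees
(first the `-1`-child, then the `+1`-child). -/
inductive EMT (X : Type*) where
  | leaf : (X → ℤ) → EMT X
  | node : X → ℤ → EMT X → EMT X → EMT X

/-- Validity of an extended mistake tree for the class `H`: the dashed-edge labels are in
`{-1,+1}` and every leaf is labeled by a hypothesis of `H` consistent with the
root-to-leaf path (and satisfying the accumulated constraint `P`). -/
def EMT.ValidFrom {X : Type*} (H : Set (X → ℤ)) (P : (X → ℤ) → Prop) : EMT X → Prop
  | .leaf h => h ∈ H ∧ P h
  | .node a y tneg tpos => (y = 1 ∨ y = -1) ∧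
      EMT.ValidFrom H (fun h => P h ∧ h a = -1) tneg ∧
      EMT.ValidFrom H (fun h => P h ∧ h a = 1) tpos

/-- The set of pairs `(number of solid edges, length)` of root-to-leaf paths of an
extended mistake tree. An edge to a child is solid iff that child is not the one the
dashed edge points to. -/
def EMT.paths {X : Type*} : EMT X → Set (ℕ × ℕ)
  | .leaf _ => {(0, 0)}
  | .node _ y tneg tpos =>
      (fun p => (p.1 + (if y = -1 then 0 else 1), p.2 + 1)) '' EMT.paths tneg ∪
      (fun p => (p.1 + (if y = 1 then 0 else 1), p.2 + 1)) '' EMT.paths tpos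

/-- A tree is `(k,m)`-difficult iff every root-to-leaf path using at most `k` solid
edges has length at least `m`. -/
def EMT.Difficult {X : Type*} (T : EMT X) (k m : ℕ) : Prop :=
  ∀ p ∈ T.paths, p.1 ≤ k → m ≤ p.2

def myB : ℕ → ℕ → ℕ
  | 0, _ => 1
  | _+1, 0 => 1
  | j+1, m+1 => myB (j+1) m + myB j m

lemma choose_le_myB : ∀ j m, Nat.choose m j ≤ myB j m
  | 0, m => by simp [myB]
  | j+1, 0 => by simp [myB]
  | j+1, m+1 => by
      have h1 := choose_le_myB (j+1) m
      have h2 := choose_le_myB j m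
      rw [Nat.choose_succ_succ]
      simp only [myB, Nat.succ_eq_add_one]
      omega

lemma pow_le_bound (d m : ℕ) (hd : 0 < d) (hdm : d ≤ m) :
    m ^ d * d.factorial ≤ d ^ d * m.descFactorial d := by
  rw [Nat.descFactorial_eq_prod_range, ← Finset.prod_range_add_one_eq_factorial,
    ← Finset.prod_range_reflect (fun j => m - j) d,
    Finset.pow_eq_prod_const m d, Finset.pow_eq_prod_const d d,
    ← Finset.prod_mul_distrib, ← Finset.prod_mul_distrib]
  apply Finset.prod_le_prod (fun i _ => Nat.zero_le _)
  intro i hi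
  simp only [Finset.mem_range] at hi
  have h2 : i ≤ d - 1 := by omega
  have h3 : d - 1 - i ≤ m := by omega
  have h1 : 1 ≤ d := hd
  zify [h1, h2, h3]
  nlinarith [mul_nonneg (show (0:ℤ) ≤ (m:ℤ) - d by omega)
    (show (0:ℤ) ≤ (d:ℤ) - 1 - i by omega)]

lemma validNonempty {X : Type*} (H : Set (X → ℤ)) :
    ∀ (T : EMT X) (P : (X → ℤ) → Prop), T.ValidFrom H P → ∃ h, h ∈ H ∧ P h
  | .leaf h, P, hv => ⟨h, hv.1, hv.2⟩
  | .node a y tneg tpos, P, hv => by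
      obtain ⟨h, hH, hP⟩ := validNonempty H tneg _ hv.2.1
      exact ⟨h, hH, hP.1⟩

lemma sep_finite {X : Type*} {H : Set (X → ℤ)} (hHfin : H.Finite)
    (P : (X → ℤ) → Prop) : {h ∈ H | P h}.Finite :=
  hHfin.subset (Set.sep_subset _ _)

lemma one_le_sep {X : Type*} {H : Set (X → ℤ)} (hHfin : H.Finite)
    {P : (X → ℤ) → Prop} (hne : ∃ h, h ∈ H ∧ P h) : 1 ≤ {h ∈ H | P h}.ncard := by
  obtain ⟨h, hH, hP⟩ := hne
  exact (Set.ncard_pos (sep_finite hHfin P)).2 ⟨h, hH, hP⟩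

lemma main_count {X : Type*} {H : Set (X → ℤ)} (hHfin : H.Finite) (T : EMT X) :
    ∀ (P : (X → ℤ) → Prop) (k m : ℕ),
      T.ValidFrom H P → T.Difficult k m → myB (k+1) m ≤ {h ∈ H | P h}.ncard := by
  induction T with
  | leaf h =>
    intro P k m hv hd
    have h0 : m ≤ 0 := hd (0, 0) rfl (Nat.zero_le k)
    obtain rfl := Nat.le_zero.mp h0
    exact one_le_sep hHfin ⟨h, hv.1, hv.2⟩
  | node a y tneg tpos ihneg ihpos =>
    intro P k m hv hd
    obtain ⟨hy, hvneg, hvpos⟩ := hv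
    rcases m with _ | m
    · obtain ⟨h, hH, hP⟩ := validNonempty H tneg _ hvneg
      simpa [myB] using one_le_sep hHfin (P := P) ⟨h, hH, hP.1⟩
    ·
      -- name the dashed and solid subtrees according to y
      rcases hy with rfl | rfl
      · have hdpos : tpos.Difficult k m := by
          intro p hp hk
          have hmem : ((p.1 + 0, p.2 + 1) : ℕ × ℕ) ∈ (EMT.node a 1 tneg tpos).paths :=
            Or.inr ⟨p, hp, by simp [EMT.paths]⟩
          exact Nat.succ_le_succ_iff.mp (hd _ hmem hk)
        have hBpos : myB (k+1) m ≤ {h ∈ H | P h ∧ h a = 1}.ncard :=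
          ihpos _ k m hvpos hdpos
        have hsolid : ∀ p ∈ tneg.paths, p.1 + 1 ≤ k → m ≤ p.2 := by
          intro p hp hk
          have hmem : ((p.1 + 1, p.2 + 1) : ℕ × ℕ) ∈ (EMT.node a 1 tneg tpos).paths :=
            Or.inl ⟨p, hp, by norm_num [EMT.paths]⟩
          exact Nat.succ_le_succ_iff.mp (hd _ hmem hk)
        have hBneg : myB k m ≤ {h ∈ H | P h ∧ h a = -1}.ncard := by
          clear hd hBpos
          rcases k with _ | k'
          · obtain ⟨h, hH, hP⟩ := validNonempty H tneg _ hvneg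
            simpa [myB] using one_le_sep hHfin (P := fun h => P h ∧ h a = -1) ⟨h, hH, hP⟩
          · exact ihneg _ k' m hvneg (fun p hp hk => hsolid p hp (Nat.succ_le_succ hk))
        have hdisj : Disjoint {h ∈ H | P h ∧ h a = -1} {h ∈ H | P h ∧ h a = 1} := by
          rw [Set.disjoint_left]
          rintro h ⟨hH, hP, hval⟩ ⟨hH', hP', hval'⟩
          rw [hval] at hval'; exact absurd hval' (by decide)
        have hsub : {h ∈ H | P h ∧ h a = -1} ∪ {h ∈ H | P h ∧ h a = 1} ⊆ {h ∈ H | P h} := by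
          rintro h (⟨hH, hP, _⟩ | ⟨hH, hP, _⟩) <;> exact ⟨hH, hP⟩
        have hcard : {h ∈ H | P h ∧ h a = -1}.ncard + {h ∈ H | P h ∧ h a = 1}.ncard
            ≤ {h ∈ H | P h}.ncard := by
          rw [← Set.ncard_union_eq hdisj (sep_finite hHfin _) (sep_finite hHfin _)]
          exact Set.ncard_le_ncard hsub (sep_finite hHfin _)
        simp only [myB]
        refine le_trans (Nat.add_le_add hBpos hBneg) ?_
        rw [Nat.add_comm]; exact hcard
      · have hdneg : tneg.Difficult k m := by
          intro p hp hk
          have hmem : ((p.1 + 0, p.2 + 1) : ℕ × ℕ) ∈ (EMT.node a (-1) tneg tpos).paths :=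
            Or.inl ⟨p, hp, by simp [EMT.paths]⟩
          exact Nat.succ_le_succ_iff.mp (hd _ hmem hk)
        have hBneg : myB (k+1) m ≤ {h ∈ H | P h ∧ h a = -1}.ncard :=
          ihneg _ k m hvneg hdneg
        have hsolid : ∀ p ∈ tpos.paths, p.1 + 1 ≤ k → m ≤ p.2 := by
          intro p hp hk
          have hmem : ((p.1 + 1, p.2 + 1) : ℕ × ℕ) ∈ (EMT.node a (-1) tneg tpos).paths :=
            Or.inr ⟨p, hp, by norm_num [EMT.paths]⟩
          exact Nat.succ_le_succ_iff.mp (hd _ hmem hk)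
        have hBpos : myB k m ≤ {h ∈ H | P h ∧ h a = 1}.ncard := by
          clear hd hBneg
          rcases k with _ | k'
          · obtain ⟨h, hH, hP⟩ := validNonempty H tpos _ hvpos
            simpa [myB] using one_le_sep hHfin (P := fun h => P h ∧ h a = 1) ⟨h, hH, hP⟩
          · exact ihpos _ k' m hvpos (fun p hp hk => hsolid p hp (Nat.succ_le_succ hk))
        have hdisj : Disjoint {h ∈ H | P h ∧ h a = -1} {h ∈ H | P h ∧ h a = 1} := by
          rw [Set.disjoint_left]
          rintro h ⟨hH, hP, hval⟩ ⟨hH', hP', hval'⟩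
          rw [hval] at hval'; exact absurd hval' (by decide)
        have hsub : {h ∈ H | P h ∧ h a = -1} ∪ {h ∈ H | P h ∧ h a = 1} ⊆ {h ∈ H | P h} := by
          rintro h (⟨hH, hP, _⟩ | ⟨hH, hP, _⟩) <;> exact ⟨hH, hP⟩
        have hcard : {h ∈ H | P h ∧ h a = -1}.ncard + {h ∈ H | P h ∧ h a = 1}.ncard
            ≤ {h ∈ H | P h}.ncard := by
          rw [← Set.ncard_union_eq hdisj (sep_finite hHfin _) (sep_finite hHfin _)]
          exact Set.ncard_le_ncard hsub (sep_finite hHfin _)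
        simp only [myB]
        exact le_trans (Nat.add_le_add hBneg hBpos) hcard

theorem stmt16 {X : Type*} (H : Set (X → ℤ)) (hHfin : H.Finite)
    (hsign : ∀ h ∈ H, ∀ a : X, h a = 1 ∨ h a = -1)
    (k : ℕ) (m : ℕ)
    (hm : ∃ T : EMT X, T.ValidFrom H (fun _ => True) ∧ T.Difficult k m) :
    (m : ℝ) ≤ ((k : ℝ) + 1) * (H.ncard : ℝ) ^ (1 / ((k : ℝ) + 1)) := by
  obtain ⟨T, hvalid, hdiff⟩ := hm
  have hB : myB (k+1) m ≤ H.ncard := by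
    have h := main_count hHfin T (fun _ => True) k m hvalid hdiff
    have he : {h ∈ H | True} = H := by simp
    rwa [he] at h
  obtain ⟨h0, hH0, -⟩ := validNonempty H T _ hvalid
  have hH1 : 1 ≤ H.ncard := (Set.ncard_pos hHfin).2 ⟨h0, hH0⟩
  have hk1 : (0:ℝ) < (k:ℝ) + 1 := by positivity
  have hr : (1:ℝ) ≤ (H.ncard : ℝ) ^ (1 / ((k:ℝ)+1)) :=
    Real.one_le_rpow (by exact_mod_cast hH1) (by positivity)
  by_cases hcase : m < k + 1
  · have hmk : (m:ℝ) ≤ (k:ℝ) + 1 := by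
      have : (m:ℝ) ≤ (k:ℝ) := by exact_mod_cast Nat.lt_succ_iff.mp hcase
      linarith
    calc (m:ℝ) ≤ ((k:ℝ)+1) * 1 := by linarith
      _ ≤ ((k:ℝ)+1) * (H.ncard : ℝ) ^ (1 / ((k:ℝ)+1)) :=
          mul_le_mul_of_nonneg_left hr hk1.le
  · push_neg at hcase
    have hchoose : m.choose (k+1) ≤ H.ncard := le_trans (choose_le_myB (k+1) m) hB
    have hkey : m ^ (k+1) ≤ (k+1) ^ (k+1) * H.ncard := by
      have h1 := pow_le_bound (k+1) m (Nat.succ_pos k) hcase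
      rw [Nat.descFactorial_eq_factorial_mul_choose] at h1
      have h2 : m ^ (k+1) * (k+1).factorial
          ≤ ((k+1) ^ (k+1) * m.choose (k+1)) * (k+1).factorial := by
        calc m ^ (k+1) * (k+1).factorial
            ≤ (k+1) ^ (k+1) * ((k+1).factorial * m.choose (k+1)) := h1
          _ = ((k+1) ^ (k+1) * m.choose (k+1)) * (k+1).factorial := by ring
      have h3 : m ^ (k+1) ≤ (k+1) ^ (k+1) * m.choose (k+1) :=
        Nat.le_of_mul_le_mul_right h2 (Nat.factorial_pos _)
      exact le_trans h3 (Nat.mul_le_mul_left _ hchoose)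
    have hreal : ((m:ℝ)/((k:ℝ)+1))^(k+1) ≤ (H.ncard:ℝ) := by
      rw [div_pow, div_le_iff₀ (by positivity)]
      have hc : ((m:ℝ))^(k+1) ≤ ((k:ℝ)+1)^(k+1) * (H.ncard:ℝ) := by
        exact_mod_cast hkey
      linarith [hc]
    have h2 : (m:ℝ)/((k:ℝ)+1) ≤ (H.ncard:ℝ) ^ (1/((k:ℝ)+1)) := by
      have hx : (0:ℝ) ≤ (m:ℝ)/((k:ℝ)+1) := by positivity
      have h3 := Real.rpow_le_rpow (by positivity) hreal
        (le_of_lt (by positivity : (0:ℝ) < 1/((k:ℝ)+1)))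
      rwa [← Real.rpow_natCast ((m:ℝ)/((k:ℝ)+1)) (k+1), ← Real.rpow_mul hx,
        show ((k+1:ℕ):ℝ) * (1/((k:ℝ)+1)) = 1 by push_cast; field_simp,
        Real.rpow_one] at h3
    rw [div_le_iff₀ hk1] at h2
    linarith [h2]
end
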